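/- Let (G,P) be a quasi-lattice ordered group with a FESSPE F, let x = pq⁻¹ with p,q ∈ P, and let y ∈ P with xy ∉ P but q ∨ y < ∞. Then there exists a ∈ F with q ∨ (ya) = q ∨ y. Consequently, T_p T_q* (T_y T_y* − T_{ya} T_{ya}*) = 0 for this a, where T is the Toeplitz representation on ℓ²(P). -/

import Mathlib

/-!
The join `v = q ∨ y` lies strictly above `y` (otherwise `q ≤ y` and `p q⁻¹ y ∈ P`), so
`y⁻¹ v ∈ P \ {1} = F P` yields `a ∈ F` with `y ≤ y a ≤ v`, whence `q ∨ (y a) = v`.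
On a basis vector `δ_t`, the operator `T_y T_y* - T_{ya} T_{ya}*` is the indicator of
`y ≤ t ∧ ¬ y a ≤ t`, while `T_q*` kills `δ_t` unless `q ≤ t`; these are incompatible, since
`q, y ≤ t` forces `v ≤ t` and so `y a ≤ t`.
-/

open scoped InnerProductSpace

namespace HilbertBasis

variable {ι 𝕜 E F : Type*} [RCLike 𝕜] [NormedAddCommGroup E] [InnerProductSpace 𝕜 E]

theorem ext_inner (b : HilbertBasis ι 𝕜 E) {x y : E} (h : ∀ i, ⟪b i, x⟫_𝕜 = ⟪b i, y⟫_𝕜) :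
    x = y :=
  b.repr.injective <| lp.ext <| funext fun i => by simpa only [b.repr_apply_apply] using h i

theorem ext_continuousLinearMap [NormedAddCommGroup F] [NormedSpace 𝕜 F]
    (b : HilbertBasis ι 𝕜 E) {A B : E →L[𝕜] F} (h : ∀ i, A (b i) = B (b i)) : A = B :=
  A.ext_on (Submodule.dense_iff_topologicalClosure_eq_top.mpr b.dense_span) <| by
    rintro _ ⟨i, rfl⟩
    exact h i

end HilbertBasis

section Toeplitz

variable {G : Type*} [Group G] {P : Set G} (hmul : ∀ a ∈ P, ∀ b ∈ P, a * b ∈ P)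
  {𝕜 H : Type*} [RCLike 𝕜] [NormedAddCommGroup H] [InnerProductSpace 𝕜 H] [CompleteSpace H]
  {b : HilbertBasis P 𝕜 H} {T : P → H →L[𝕜] H}
  (hT : ∀ s t : P, T s (b t) = b ⟨(s : G) * (t : G), hmul _ s.2 _ t.2⟩)
include hT

open scoped Classical in
theorem adjoint_apply_hilbertBasis (s t : P) :
    ContinuousLinearMap.adjoint (T s) (b t) =
      if h : (s : G)⁻¹ * t ∈ P then b ⟨(s : G)⁻¹ * t, h⟩ else 0 := by
  have hb := orthonormal_iff_ite.mp b.orthonormal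
  refine b.ext_inner fun i => ?_
  have hst : (⟨s * i, hmul _ s.2 _ i.2⟩ : P) = t ↔ (i : G) = (s : G)⁻¹ * t := by
    rw [Subtype.ext_iff, eq_inv_mul_iff_mul_eq]
  rw [ContinuousLinearMap.adjoint_inner_right, hT, hb]
  by_cases h : (s : G)⁻¹ * t ∈ P
  · rw [dif_pos h, hb]
    exact if_congr (hst.trans ⟨fun hi => Subtype.ext hi, congrArg Subtype.val⟩) rfl rfl
  · rw [dif_neg h, inner_zero_right, if_neg (hst.not.mpr fun hi => h (hi ▸ i.2))]

open scoped Classical in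
theorem mul_adjoint_apply_hilbertBasis (s t : P) :
    (T s * ContinuousLinearMap.adjoint (T s)) (b t) =
      if (s : G)⁻¹ * t ∈ P then b t else 0 := by
  rw [mul_apply_eq_comp, adjoint_apply_hilbertBasis hmul hT]
  split_ifs
  · rw [hT]
    exact congrArg b (Subtype.ext (mul_inv_cancel_left _ _))
  · exact map_zero _

theorem adjoint_mul_sub_mul_adjoint_eq_zero (q y y' : P)
    (hyy' : ∀ t : P, (y' : G)⁻¹ * t ∈ P → (y : G)⁻¹ * t ∈ P)
    (hy'y : ∀ t : P, (q : G)⁻¹ * t ∈ P → (y : G)⁻¹ * t ∈ P → (y' : G)⁻¹ * t ∈ P) :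
    ContinuousLinearMap.adjoint (T q) *
      (T y * ContinuousLinearMap.adjoint (T y) - T y' * ContinuousLinearMap.adjoint (T y')) =
      0 := by
  classical
  refine b.ext_continuousLinearMap fun t => ?_
  rw [mul_apply_eq_comp, sub_apply,
    mul_adjoint_apply_hilbertBasis hmul hT, mul_adjoint_apply_hilbertBasis hmul hT,
    zero_apply]
  by_cases hy't : (y' : G)⁻¹ * t ∈ P
  · rw [if_pos (hyy' t hy't), if_pos hy't, sub_self, map_zero]
  by_cases hyt : (y : G)⁻¹ * t ∈ P
  · rw [if_pos hyt, if_neg hy't, sub_zero, adjoint_apply_hilbertBasis hmul hT,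
      dif_neg fun hqt => hy't (hy'y t hqt hyt)]
  · rw [if_neg hyt, if_neg hy't, sub_self, map_zero]

end Toeplitz

section QuasiLatticeOrder

variable {G : Type*} [Group G] {P : Set G}

/-- `v = x ∨ y` for the order `u ≤ w ↔ u⁻¹ * w ∈ P`. -/
def IsJoin (P : Set G) (x y v : G) : Prop :=
  v ∈ P ∧ x⁻¹ * v ∈ P ∧ y⁻¹ * v ∈ P ∧ ∀ u ∈ P, x⁻¹ * u ∈ P → y⁻¹ * u ∈ P → v⁻¹ * u ∈ P

theorem IsJoin.exists_mem_isJoin_mul {F : Finset G} (hmul : ∀ a ∈ P, ∀ b ∈ P, a * b ∈ P)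
    (hF : ↑F ⊆ P) (hFP : {w : G | ∃ a ∈ F, ∃ p ∈ P, w = a * p} = P \ {1})
    {x y v : G} (hv : IsJoin P x y v) (hvy : v ≠ y) : ∃ a ∈ F, IsJoin P x (y * a) v := by
  obtain ⟨hvP, hxv, hyv, hleast⟩ := hv
  have hyv' : y⁻¹ * v ∈ {w : G | ∃ a ∈ F, ∃ p ∈ P, w = a * p} := by
    rw [hFP]
    exact ⟨hyv, fun h => hvy (inv_mul_eq_one.mp h).symm⟩
  obtain ⟨a, haF, r, hr, hyvr⟩ := hyv'
  have hyav : (y * a)⁻¹ * v = r := by rw [mul_inv_rev, mul_assoc, hyvr, inv_mul_cancel_left]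
  refine ⟨a, haF, hvP, hxv, hyav ▸ hr, fun u hu hxu hyau => hleast u hu hxu ?_⟩
  simpa [mul_assoc] using hmul a (hF haF) _ hyau

theorem IsJoin.inv_mul_mem {x y y' v : G} (hmul : ∀ a ∈ P, ∀ b ∈ P, a * b ∈ P)
    (hv : IsJoin P x y v) (hv' : IsJoin P x y' v) {u : G} (hu : u ∈ P) (hxu : x⁻¹ * u ∈ P)
    (hyu : y⁻¹ * u ∈ P) : y'⁻¹ * u ∈ P := by
  simpa [mul_assoc] using hmul _ hv'.2.2.1 _ (hv.2.2.2 u hu hxu hyu)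

end QuasiLatticeOrder

theorem stmt13_general {G : Type*} [Group G] (P : Set G)
    (hmul : ∀ a ∈ P, ∀ b ∈ P, a * b ∈ P)
    (F : Finset G) (hF : ↑F ⊆ P \ {1})
    (hFP : {w : G | ∃ a ∈ F, ∃ p ∈ P, w = a * p} = P \ {1})
    {H : Type*} [NormedAddCommGroup H] [InnerProductSpace ℂ H] [CompleteSpace H]
    (b : HilbertBasis P ℂ H)
    (T : P → H →L[ℂ] H)
    (hT : ∀ s t : P, T s (b t) = b ⟨(s : G) * (t : G), hmul _ s.2 _ t.2⟩)
    (p q y : G) (hp : p ∈ P) (hq : q ∈ P) (hy : y ∈ P)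
    (hxy : p * q⁻¹ * y ∉ P)
    (v : G)
    (hv : v ∈ P ∧ q⁻¹ * v ∈ P ∧ y⁻¹ * v ∈ P ∧
      ∀ u ∈ P, q⁻¹ * u ∈ P → y⁻¹ * u ∈ P → v⁻¹ * u ∈ P) :
    ∃ a ∈ F, ∃ hya : y * a ∈ P,
      (v ∈ P ∧ q⁻¹ * v ∈ P ∧ (y * a)⁻¹ * v ∈ P ∧
        ∀ u ∈ P, q⁻¹ * u ∈ P → (y * a)⁻¹ * u ∈ P → v⁻¹ * u ∈ P) ∧
      T ⟨p, hp⟩ * ContinuousLinearMap.adjoint (T ⟨q, hq⟩) *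
        (T ⟨y, hy⟩ * ContinuousLinearMap.adjoint (T ⟨y, hy⟩) -
         T ⟨y * a, hya⟩ * ContinuousLinearMap.adjoint (T ⟨y * a, hya⟩)) = 0 := by
  have hv : IsJoin P q y v := hv
  have hvy : v ≠ y := by
    rintro rfl
    exact hxy (mul_assoc p _ _ ▸ hmul p hp _ hv.2.1)
  obtain ⟨a, haF, hva⟩ := hv.exists_mem_isJoin_mul hmul (hF.trans Set.sdiff_subset) hFP hvy
  have haP : a ∈ P := (hF haF).1
  refine ⟨a, haF, hmul y hy a haP, hva, ?_⟩
  rw [mul_assoc, adjoint_mul_sub_mul_adjoint_eq_zero hmul hT, mul_zero]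
  · exact fun t hyat => by simpa [mul_assoc] using hmul a haP _ hyat
  · exact fun t hqt hyt => hv.inv_mul_mem hmul hva t.2 hqt hyt

/-- If `(G, P)` has a FESSPE `F`, `p, q, y ∈ P`, `x = pq⁻¹`, `xy ∉ P` and `q ∨ y < ∞`,
then there exists `a ∈ F` with `q ∨ (ya) = q ∨ y`; consequently, for this `a`,
`T_p T_q* (T_y T_y* − T_{ya} T_{ya}*) = 0` on `ℓ²(P)`. -/
theorem stmt13 {G : Type*} [Group G] (P : Set G)
    (hone : (1 : G) ∈ P)
    (hmul : ∀ a ∈ P, ∀ b ∈ P, a * b ∈ P)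
    (hpos : ∀ a ∈ P, a⁻¹ ∈ P → a = 1)
    (hql : ∀ x y : G, (∃ u ∈ P, x⁻¹ * u ∈ P ∧ y⁻¹ * u ∈ P) →
      ∃ v ∈ P, x⁻¹ * v ∈ P ∧ y⁻¹ * v ∈ P ∧
        ∀ u ∈ P, x⁻¹ * u ∈ P → y⁻¹ * u ∈ P → v⁻¹ * u ∈ P)
    (F : Finset G) (hF : ↑F ⊆ P \ {1})
    (hFP : {w : G | ∃ a ∈ F, ∃ p ∈ P, w = a * p} = P \ {1})
    {H : Type*} [NormedAddCommGroup H] [InnerProductSpace ℂ H] [CompleteSpace H]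
    (b : HilbertBasis P ℂ H)
    (T : P → H →L[ℂ] H)
    (hT : ∀ s t : P, T s (b t) = b ⟨(s : G) * (t : G), hmul _ s.2 _ t.2⟩)
    (p q y : G) (hp : p ∈ P) (hq : q ∈ P) (hy : y ∈ P)
    (hxy : p * q⁻¹ * y ∉ P)
    (v : G)
    (hv : v ∈ P ∧ q⁻¹ * v ∈ P ∧ y⁻¹ * v ∈ P ∧
      ∀ u ∈ P, q⁻¹ * u ∈ P → y⁻¹ * u ∈ P → v⁻¹ * u ∈ P) :
    ∃ a ∈ F, ∃ hya : y * a ∈ P,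
      (v ∈ P ∧ q⁻¹ * v ∈ P ∧ (y * a)⁻¹ * v ∈ P ∧
        ∀ u ∈ P, q⁻¹ * u ∈ P → (y * a)⁻¹ * u ∈ P → v⁻¹ * u ∈ P) ∧
      T ⟨p, hp⟩ * ContinuousLinearMap.adjoint (T ⟨q, hq⟩) *
        (T ⟨y, hy⟩ * ContinuousLinearMap.adjoint (T ⟨y, hy⟩) -
         T ⟨y * a, hya⟩ * ContinuousLinearMap.adjoint (T ⟨y * a, hya⟩)) = 0 :=
  stmt13_general P hmul F hF hFP b T hT p q y hp hq hy hxy v hv
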